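/- arXiv:1503.03785 — 2 statements merged into one kernel-verified Lean document; each statement's English description precedes it below -/
import Mathlib

section
/- Let A = ((a_n, r_n))_{n≥0} be an abstract Swiss cheese with ρ(A) < ∞. Then there exists a redundancy-free abstract Swiss cheese B = ((b_n, s_n)) ∈ N with X_B = X_A, μ(B) < ∞, B̄(b_0, s_0) = B̄(a_0, r_0), and such that ρ_E(B) ≤ ρ_E(A) for every subset E ⊆ ℂ; in particular ρ(B) ≤ ρ(A). -/
open Metric Set Filter Topology ENNReal

noncomputable section

/-- Abstract Swiss cheese space `F = (ℂ × [0,∞))^{ℕ₀}` with the product topology. -/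
abbrev ASC := ℕ → ℂ × NNReal

/-- The centre of the `n`-th disk. -/
def ctr (A : ASC) (n : ℕ) : ℂ := (A n).1

/-- The radius of the `n`-th disk, as a real number. -/
def rad (A : ASC) (n : ℕ) : ℝ := ((A n).2 : ℝ)

/-- The associated Swiss cheese set `X_A`. -/
def Xset (A : ASC) : Set ℂ :=
  closedBall (ctr A 0) (rad A 0) \ ⋃ n : ℕ, ball (ctr A (n + 1)) (rad A (n + 1))

/-- The significant index set `S_A = {n ≥ 1 : r_n > 0}`. -/
def SIdx (A : ASC) : Set ℕ := {n | 1 ≤ n ∧ 0 < rad A n}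

/-- The radius sum function `ρ(A) = ∑_{n≥1} r_n`, valued in `[0,∞]`. -/
def rhoSum (A : ASC) : ℝ≥0∞ := ∑' n : ℕ, ((A (n + 1)).2 : ℝ≥0∞)

/-- The centre bound function `μ(A) = sup_{n≥1} |a_n|`, valued in `[0,∞]`. -/
def muSup (A : ASC) : ℝ≥0∞ := ⨆ n : ℕ, (‖(A (n + 1)).1‖₊ : ℝ≥0∞)

/-- `H_A(E) = {n ∈ S_A : B̄(a_n, r_n) ∩ E ≠ ∅}`. -/
def HIdx (A : ASC) (E : Set ℂ) : Set ℕ :=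
  {n | n ∈ SIdx A ∧ (closedBall (ctr A n) (rad A n) ∩ E).Nonempty}

/-- The local radius sum function `ρ_E(A) = ∑_{n ∈ H_A(E)} r_n`. -/
def rhoLoc (A : ASC) (E : Set ℂ) : ℝ≥0∞ :=
  ∑' n : HIdx A E, ((A (n : ℕ)).2 : ℝ≥0∞)

/-- The discrepancy function of order 1, `δ₁(A) = r_0 − ∑_{n≥1} r_n ∈ [−∞,∞)`. -/
def delta1 (A : ASC) : EReal := (rad A 0 : EReal) - ((rhoSum A : ℝ≥0∞) : EReal)

/-- The discrepancy function of order `α`, `δ_α(A) = r_0^α − ∑_{n≥1} r_n^α ∈ [−∞,∞)`. -/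
def deltaAlpha (α : ℝ) (A : ASC) : EReal :=
  ((((A 0).2 : ℝ≥0∞) ^ α : ℝ≥0∞) : EReal) -
    ((∑' n : ℕ, ((A (n + 1)).2 : ℝ≥0∞) ^ α : ℝ≥0∞) : EReal)

/-- The discrepancy function of order 2. -/
def delta2 (A : ASC) : EReal := deltaAlpha 2 A

/-- `A` is classical. -/
def IsClassicalASC (A : ASC) : Prop :=
  rhoSum A < ⊤ ∧ 0 < rad A 0 ∧
  ∀ k ∈ SIdx A,
    closedBall (ctr A k) (rad A k) ⊆ ball (ctr A 0) (rad A 0) ∧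
    ∀ l ∈ SIdx A, l ≠ k →
      closedBall (ctr A k) (rad A k) ∩ closedBall (ctr A l) (rad A l) = ∅

/-- `A` is semiclassical. -/
def IsSemiclassicalASC (A : ASC) : Prop :=
  rhoSum A < ⊤ ∧ 0 < rad A 0 ∧
  ∀ k ∈ SIdx A,
    ball (ctr A k) (rad A k) ⊆ ball (ctr A 0) (rad A 0) ∧
    ∀ l ∈ SIdx A, l ≠ k →
      ball (ctr A k) (rad A k) ∩ ball (ctr A l) (rad A l) = ∅

/-- Membership in `N`: finite radius sum and `(r_n)_{n≥1}` non-increasing. -/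
def memN (A : ASC) : Prop :=
  rhoSum A < ⊤ ∧ ∀ n : ℕ, 1 ≤ n → (A (n + 1)).2 ≤ (A n).2

/-- Membership in `N(M,R)`. -/
def memNMR (M R : ℝ≥0∞) (A : ASC) : Prop := memN A ∧ muSup A ≤ M ∧ rhoSum A ≤ R

/-- `A` is redundancy-free. -/
def RedundancyFree (A : ASC) : Prop :=
  ∀ k ∈ SIdx A,
    (ball (ctr A k) (rad A k) ∩ closedBall (ctr A 0) (rad A 0)).Nonempty ∧
    ∀ l ∈ SIdx A, l ≠ k → ¬ ball (ctr A k) (rad A k) ⊆ ball (ctr A l) (rad A l)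

/-- `B` is partially above `A`. -/
def PartiallyAbove (B A : ASC) : Prop :=
  closedBall (ctr B 0) (rad B 0) ⊆ closedBall (ctr A 0) (rad A 0) ∧
  ∀ n : ℕ, 1 ≤ n →
    ball (ctr A n) (rad A n) ⊆ (closedBall (ctr B 0) (rad B 0))ᶜ ∨
    ∃ m : ℕ, 1 ≤ m ∧ ball (ctr A n) (rad A n) ⊆ ball (ctr B m) (rad B m)

/-- The set `S̃` of all `B ∈ N(μ(A), ρ(A))` partially above `A`. -/
def Stilde (A : ASC) : Set ASC :=
  {B | memNMR (muSup A) (rhoSum A) B ∧ PartiallyAbove B A}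

/-- `S₁`: the elements of `S̃` on which `δ₁` attains its supremum over `S̃`. -/
def S1 (A : ASC) : Set ASC :=
  {B ∈ Stilde A | delta1 B = sSup (delta1 '' Stilde A)}

/-- `S₂`: the elements of `S₁` on which `δ₂` attains its infimum over `S₁`. -/
def S2 (A : ASC) : Set ASC :=
  {B ∈ S1 A | delta2 B = sInf (delta2 '' S1 A)}

/-- The (classical) error set `E(A)`. -/
def errSet (A : ASC) : Set ℂ :=
  (⋃ m ∈ SIdx A, ⋃ n ∈ SIdx A, ⋃ (_ : m ≠ n),
    closedBall (ctr A m) (rad A m) ∩ closedBall (ctr A n) (rad A n)) ∪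
  ⋃ n ∈ SIdx A, (ball (ctr A 0) (rad A 0))ᶜ ∩ closedBall (ctr A n) (rad A n)

/-- `V(C) = ⋃_{n∈I} U_n`. -/
def VC (I : Set ℕ) (U : ℕ → Set ℂ) : Set ℂ := ⋃ n ∈ I, U n

/-- `F(C) = ⋃_{n∈I} K_n`. -/
def FC (I : Set ℕ) (K : ℕ → Set ℂ) : Set ℂ := ⋃ n ∈ I, K n

/-- The set `L_A(C)` for a controlling collection `C = ((K_n, U_n))_{n∈I}`. -/
def LSet (A : ASC) (I : Set ℕ) (K U : ℕ → Set ℂ) : Set ASC :=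
  {B | memNMR (muSup A) (rhoSum A) B ∧
    (∀ n ∈ I, rhoLoc B (U n) ≤ rhoLoc A (U n)) ∧
    closedBall (ctr B 0) (rad B 0) = closedBall (ctr A 0) (rad A 0) ∧
    (∀ k ∈ SIdx A, closedBall (ctr A k) (rad A k) ∩ VC I U = ∅ →
      ∃ l ∈ SIdx B, ball (ctr B l) (rad B l) = ball (ctr A k) (rad A k)) ∧
    (∀ n ∈ I, ∀ k ∈ SIdx A, (closedBall (ctr A k) (rad A k) ∩ U n).Nonempty →
      (∃ l ∈ SIdx B, ball (ctr B l) (rad B l) = ball (ctr A k) (rad A k)) ∨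
      (∃ l ∈ HIdx B (K n), ball (ctr A k) (rad A k) ⊆ ball (ctr B l) (rad B l)))}

/-- `A` is annular: `a_0 = a_1` and `0 < r_1 < r_0`. -/
def Annular (A : ASC) : Prop := ctr A 0 = ctr A 1 ∧ 0 < rad A 1 ∧ rad A 1 < rad A 0

/-- The annular radius sum `ρ_a(A) = ∑_{n≥2} r_n`. -/
def rhoAnn (A : ASC) : ℝ≥0∞ := ∑' n : ℕ, ((A (n + 2)).2 : ℝ≥0∞)

/-- The annular discrepancy `δ_a(A) = r_0 − r_1 − 2ρ_a(A)`. -/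
def deltaAnn (A : ASC) : EReal :=
  ((rad A 0 - rad A 1 : ℝ) : EReal) - ((2 * rhoAnn A : ℝ≥0∞) : EReal)

/-- The family `Ã` of Lemma 6.4 / Theorem 6.6 (annular classicalisation). -/
def ATilde (A : ASC) : Set ASC :=
  {B | (∀ n : ℕ, 2 ≤ n → (B (n + 1)).2 ≤ (B n).2) ∧
    rhoAnn B ≤ rhoAnn A ∧ muSup B ≤ muSup A ∧ PartiallyAbove B A ∧
    ctr B 0 = ctr A 0 ∧ ctr B 1 = ctr A 0 ∧
    rad A 1 ≤ rad B 1 ∧ rad B 1 ≤ rad B 0 ∧ rad B 0 ≤ rad A 0}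

/-! Keep only the discs that meet `B̄(a₀, r₀)` and are maximal under inclusion, one index per
disc. As `ρ(A) < ∞`, only finitely many discs have radius above any positive bound; hence every
hole meeting `B̄(a₀, r₀)` lies in a kept disc, so `X_A` is unchanged, and the kept discs can be
enumerated by decreasing radius, a disc's position being the number of kept discs before it.
This enumeration maps injectively back into the indices of `A`, which gives the bounds on the
radius sums; the centres stay bounded because every kept disc meets `B̄(a₀, r₀)`. -/

namespace SwissCheese

open Function OrderDual
open scoped NNReal

lemma radius_le_of_ball_subset {E : Type*} [NormedAddCommGroup E] [NormedSpace ℝ E]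
    [Nontrivial E] {a b : E} {r s : ℝ} (hr : 0 ≤ r) (hs : 0 ≤ s)
    (h : ball a r ⊆ ball b s) : r ≤ s := by
  have := diam_mono h isBounded_ball
  rw [diam_ball_eq a hr, diam_ball_eq b hs] at this
  linarith

lemma norm_le_of_ball_inter_closedBall_nonempty {E : Type*} [SeminormedAddCommGroup E]
    {a b : E} {r s : ℝ} (h : (ball a r ∩ closedBall b s).Nonempty) : ‖a‖ ≤ ‖b‖ + s + r := by
  obtain ⟨x, hxa, hxb⟩ := h
  have ha : a ∈ closedBall x r := mem_closedBall_comm.1 (ball_subset_closedBall hxa)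
  linarith [norm_le_of_mem_closedBall ha, norm_le_of_mem_closedBall hxb]

section Rank

def rank {ι α : Type*} [LinearOrder α] (key : ι → α) (s : Set ι) (i : ι) : ℕ :=
  {j ∈ s | key j < key i}.ncard

variable {ι α : Type*} [LinearOrder α] {key : ι → α} {s : Set ι}

lemma rank_lt_rank {i i' : ι} (hfin : {j ∈ s | key j < key i'}.Finite) (hi : i ∈ s)
    (hlt : key i < key i') : rank key s i < rank key s i' := by
  refine Set.ncard_lt_ncard ⟨fun j hj => ⟨hj.1, hj.2.trans hlt⟩, fun hsub => ?_⟩ hfin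
  exact lt_irrefl _ (hsub ⟨hi, hlt⟩).2

variable (hkey : InjOn key s) (hfin : ∀ i ∈ s, {j ∈ s | key j < key i}.Finite)
include hkey hfin

lemma rank_injOn : InjOn (rank key s) s := by
  intro i hi i' hi' heq
  by_contra hne
  rcases lt_or_gt_of_ne (hkey.ne hi hi' hne) with hlt | hlt
  · exact (rank_lt_rank (hfin i' hi') hi hlt).ne heq
  · exact (rank_lt_rank (hfin i hi) hi' hlt).ne' heq

lemma rank_image_setOf_lt {i : ι} (hi : i ∈ s) :
    rank key s '' {j ∈ s | key j < key i} = Iio (rank key s i) := by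
  refine Set.eq_of_subset_of_ncard_le ?_ ?_ (finite_Iio _)
  · rintro _ ⟨j, hj, rfl⟩
    exact rank_lt_rank (hfin i hi) hj.1 hj.2
  · rw [ncard_Iio_nat, ((rank_injOn hkey hfin).mono fun j hj => hj.1).ncard_image]
    rfl

lemma exists_rank_eq_of_lt {i : ι} (hi : i ∈ s) {k : ℕ} (hk : k < rank key s i) :
    ∃ j ∈ s, rank key s j = k := by
  obtain ⟨j, hj, rfl⟩ := (rank_image_setOf_lt hkey hfin hi).symm ▸ (show k ∈ Iio _ from hk)
  exact ⟨j, hj.1, rfl⟩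

end Rank

variable {A : ASC}

lemma rad_nonneg (A : ASC) (n : ℕ) : 0 ≤ rad A n := (A n).2.coe_nonneg

lemma radius_le_rhoSum {n : ℕ} (hn : 1 ≤ n) : ((A n).2 : ℝ≥0∞) ≤ rhoSum A := by
  obtain ⟨k, rfl⟩ := Nat.exists_eq_add_of_le' hn
  exact ENNReal.le_tsum k

lemma finite_setOf_le_radius (h : rhoSum A < ⊤) {c : ℝ≥0} (hc : c ≠ 0) :
    {n | 1 ≤ n ∧ c ≤ (A n).2}.Finite := by
  refine ((ENNReal.finite_const_le_of_tsum_ne_top h.ne (ENNReal.coe_ne_zero.2 hc)).image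
    (· + 1)).subset ?_
  rintro n ⟨hn, hcn⟩
  obtain ⟨k, rfl⟩ := Nat.exists_eq_add_of_le' hn
  exact ⟨k, ENNReal.coe_le_coe.2 hcn, rfl⟩

lemma rhoSum_eq_rhoLoc_univ (A : ASC) : rhoSum A = rhoLoc A univ := by
  have hH : HIdx A univ = SIdx A := by
    ext n
    exact ⟨fun hn => hn.1, fun hn => ⟨hn, ctr A n, mem_closedBall_self (rad_nonneg A n), trivial⟩⟩
  rw [rhoLoc, hH, tsum_subtype (SIdx A) fun n => ((A n).2 : ℝ≥0∞), ← (add_left_injective 1).tsum_eq]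
  · refine tsum_congr fun n => ?_
    by_cases hn : n + 1 ∈ SIdx A
    · rw [indicator_of_mem hn]
    · rw [indicator_of_notMem hn, ENNReal.coe_eq_zero, ← NNReal.coe_eq_zero]
      exact le_antisymm (not_lt.1 fun hr => hn ⟨Nat.le_add_left 1 n, hr⟩) (rad_nonneg A _)
  · rintro n hn
    obtain ⟨k, rfl⟩ := Nat.exists_eq_add_of_le' (support_indicator_subset hn).1
    exact ⟨k, rfl⟩

/-- The condition `n ≤ j` keeps a disc that occurs several times only at its least index. -/
def nonredundantIdx (A : ASC) : Set ℕ :=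
  {n | 1 ≤ n ∧ 0 < rad A n ∧
    (ball (ctr A n) (rad A n) ∩ closedBall (ctr A 0) (rad A 0)).Nonempty ∧
    ∀ j, 1 ≤ j → ball (ctr A n) (rad A n) ⊆ ball (ctr A j) (rad A j) →
      ball (ctr A j) (rad A j) ⊆ ball (ctr A n) (rad A n) ∧ n ≤ j}

lemma eq_of_mem_nonredundantIdx_of_ball_subset {m n : ℕ} (hm : m ∈ nonredundantIdx A)
    (hn : n ∈ nonredundantIdx A) (hsub : ball (ctr A m) (rad A m) ⊆ ball (ctr A n) (rad A n)) :
    m = n := by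
  obtain ⟨hsup, hmn⟩ := hm.2.2.2 n hn.1 hsub
  exact le_antisymm hmn (hn.2.2.2 m hm.1 hsup).2

lemma exists_nonredundantIdx_ball_subset (h : rhoSum A < ⊤) {n : ℕ} (hn : 1 ≤ n)
    (hr : 0 < rad A n)
    (hmeet : (ball (ctr A n) (rad A n) ∩ closedBall (ctr A 0) (rad A 0)).Nonempty) :
    ∃ m ∈ nonredundantIdx A, ball (ctr A n) (rad A n) ⊆ ball (ctr A m) (rad A m) := by
  classical
  set D : ℕ → Set ℂ := fun j => ball (ctr A j) (rad A j)
  set T := {j | 1 ≤ j ∧ D n ⊆ D j}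
  have hT : T.Finite := (finite_setOf_le_radius h (ne_of_gt (NNReal.coe_pos.1 hr))).subset
    fun j hj => ⟨hj.1, NNReal.coe_le_coe.1
      (radius_le_of_ball_subset (rad_nonneg A n) (rad_nonneg A j) hj.2)⟩
  obtain ⟨j₀, hj₀, hmax⟩ := hT.exists_maximalFor D T ⟨n, hn, subset_rfl⟩
  have hex : ∃ m, m ∈ T ∧ D m = D j₀ := ⟨j₀, hj₀, rfl⟩
  obtain ⟨⟨hm1, hnm⟩, hmj₀⟩ := Nat.find_spec hex
  refine ⟨Nat.find hex, ⟨hm1, nonempty_ball.1 ((nonempty_ball.2 hr).mono hnm), ?_, ?_⟩, hnm⟩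
  · obtain ⟨x, hx, hx0⟩ := hmeet
    exact ⟨x, hnm hx, hx0⟩
  · intro j hj hsub
    change D _ ⊆ D j at hsub
    change D j ⊆ D _ ∧ _
    rw [hmj₀] at hsub ⊢
    have hjT : j ∈ T := ⟨hj, hj₀.2.trans hsub⟩
    have hjj₀ := hmax hjT hsub
    exact ⟨hjj₀, Nat.find_min' hex ⟨hjT, hjj₀.antisymm hsub⟩⟩

def sortKey (A : ASC) (n : ℕ) : ℝ≥0ᵒᵈ ×ₗ ℕ := toLex (toDual (A n).2, n)

lemma sortKey_injective (A : ASC) : Injective (sortKey A) := fun m n h => by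
  simpa [sortKey] using congrArg (fun x => (ofLex x).2) h

lemma sortKey_lt_of_radius_lt {m n : ℕ} (h : (A n).2 < (A m).2) : sortKey A m < sortKey A n :=
  Prod.Lex.toLex_lt_toLex.2 (Or.inl (toDual_lt_toDual.2 h))

lemma radius_le_of_sortKey_lt {m n : ℕ} (h : sortKey A m < sortKey A n) : (A n).2 ≤ (A m).2 :=
  toDual_le_toDual.1 (Prod.Lex.toLex_lt_toLex'.1
    (show toLex (toDual (A m).2, m) < toLex (toDual (A n).2, n) from h)).1

lemma finite_setOf_sortKey_lt (h : rhoSum A < ⊤) {n : ℕ} (hn : n ∈ nonredundantIdx A) :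
    {m ∈ nonredundantIdx A | sortKey A m < sortKey A n}.Finite :=
  (finite_setOf_le_radius h (ne_of_gt (NNReal.coe_pos.1 hn.2.1))).subset
    fun _ hm => ⟨hm.1.1, radius_le_of_sortKey_lt hm.2⟩

def sortRank (A : ASC) : ℕ → ℕ := rank (sortKey A) (nonredundantIdx A)

/-- The index of the disc of rank `k`; meaningful for `k ∈ sortRank A '' nonredundantIdx A`. -/
def sortedIdx (A : ASC) : ℕ → ℕ := invFunOn (sortRank A) (nonredundantIdx A)

open Classical in
/-- The padding discs are centred at `a₀` so that the centre bound stays finite. -/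
def reduce (A : ASC) : ASC
  | 0 => A 0
  | k + 1 => if k ∈ sortRank A '' nonredundantIdx A then A (sortedIdx A k) else (ctr A 0, 0)

lemma reduce_zero : reduce A 0 = A 0 := rfl

lemma sortRank_injOn (h : rhoSum A < ⊤) : InjOn (sortRank A) (nonredundantIdx A) :=
  rank_injOn (sortKey_injective A).injOn fun _ hn => finite_setOf_sortKey_lt h hn

lemma sortedIdx_spec {k : ℕ} (hk : k ∈ sortRank A '' nonredundantIdx A) :
    sortedIdx A k ∈ nonredundantIdx A ∧ sortRank A (sortedIdx A k) = k :=
  invFunOn_pos hk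

lemma sortedIdx_sortRank (h : rhoSum A < ⊤) {n : ℕ} (hn : n ∈ nonredundantIdx A) :
    sortedIdx A (sortRank A n) = n :=
  (sortRank_injOn h).leftInvOn_invFunOn hn

lemma mem_image_sortRank_of_lt (h : rhoSum A < ⊤) {k k' : ℕ}
    (hk' : k' ∈ sortRank A '' nonredundantIdx A) (hlt : k < k') :
    k ∈ sortRank A '' nonredundantIdx A := by
  obtain ⟨n, hn, rfl⟩ := hk'
  obtain ⟨j, hj, rfl⟩ := exists_rank_eq_of_lt (sortKey_injective A).injOn
    (fun _ hn => finite_setOf_sortKey_lt h hn) hn hlt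
  exact mem_image_of_mem _ hj

lemma reduce_succ_of_mem {k : ℕ} (hk : k ∈ sortRank A '' nonredundantIdx A) :
    reduce A (k + 1) = A (sortedIdx A k) := by
  simp [reduce, hk]

lemma reduce_succ_of_notMem {k : ℕ} (hk : k ∉ sortRank A '' nonredundantIdx A) :
    reduce A (k + 1) = (ctr A 0, 0) := by
  simp only [reduce, hk, if_false]

lemma reduce_succ_sortRank (h : rhoSum A < ⊤) {n : ℕ} (hn : n ∈ nonredundantIdx A) :
    reduce A (sortRank A n + 1) = A n := by
  rw [reduce_succ_of_mem (mem_image_of_mem _ hn), sortedIdx_sortRank h hn]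

lemma exists_eq_succ_of_mem_SIdx_reduce {n : ℕ} (hn : n ∈ SIdx (reduce A)) :
    ∃ k ∈ sortRank A '' nonredundantIdx A, n = k + 1 := by
  obtain ⟨k, rfl⟩ := Nat.exists_eq_add_of_le' hn.1
  refine ⟨k, ?_, rfl⟩
  by_contra hk
  have := hn.2
  simp [rad, reduce_succ_of_notMem hk] at this

lemma reduce_eq_of_mem_SIdx {n : ℕ} (hn : n ∈ SIdx (reduce A)) :
    n - 1 ∈ sortRank A '' nonredundantIdx A ∧ reduce A n = A (sortedIdx A (n - 1)) := by
  obtain ⟨k, hk, rfl⟩ := exists_eq_succ_of_mem_SIdx_reduce hn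
  exact ⟨hk, reduce_succ_of_mem hk⟩

lemma reduce_radius_antitone (h : rhoSum A < ⊤) (n : ℕ) (hn : 1 ≤ n) :
    (reduce A (n + 1)).2 ≤ (reduce A n).2 := by
  obtain ⟨k, rfl⟩ := Nat.exists_eq_add_of_le' hn
  by_cases hk : k + 1 ∈ sortRank A '' nonredundantIdx A
  · have hk' := mem_image_sortRank_of_lt h hk k.lt_succ_self
    rw [reduce_succ_of_mem hk, reduce_succ_of_mem hk']
    by_contra! hlt
    have := rank_lt_rank (finite_setOf_sortKey_lt h (sortedIdx_spec hk').1) (sortedIdx_spec hk).1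
      (sortKey_lt_of_radius_lt hlt)
    rw [← sortRank, (sortedIdx_spec hk).2, (sortedIdx_spec hk').2] at this
    omega
  · rw [reduce_succ_of_notMem hk]
    exact zero_le

lemma Xset_reduce (h : rhoSum A < ⊤) : Xset (reduce A) = Xset A := by
  ext x
  simp only [Xset, Set.mem_sdiff, mem_iUnion]
  refine and_congr_right fun hx₀ => not_congr ⟨fun ⟨k, hx⟩ => ?_, fun ⟨n, hx⟩ => ?_⟩
  · by_cases hk : k ∈ sortRank A '' nonredundantIdx A
    · obtain ⟨hs, -⟩ := sortedIdx_spec hk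
      refine ⟨sortedIdx A k - 1, ?_⟩
      rwa [Nat.sub_add_cancel hs.1, ctr, rad, ← reduce_succ_of_mem hk]
    · simp [ctr, rad, reduce_succ_of_notMem hk] at hx
  · obtain ⟨m, hm, hsub⟩ := exists_nonredundantIdx_ball_subset h n.succ_pos
      (pos_of_mem_ball hx) ⟨x, hx, hx₀⟩
    refine ⟨sortRank A m, ?_⟩
    simpa only [ctr, rad, reduce_succ_sortRank h hm] using hsub hx

lemma redundancyFree_reduce : RedundancyFree (reduce A) := by
  intro _ hkS
  obtain ⟨k, hk, rfl⟩ := exists_eq_succ_of_mem_SIdx_reduce hkS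
  have hB := reduce_succ_of_mem hk
  refine ⟨by simpa only [ctr, rad, hB, reduce_zero] using (sortedIdx_spec hk).1.2.2.1, ?_⟩
  rintro _ hlS hne hsub
  obtain ⟨l, hl, rfl⟩ := exists_eq_succ_of_mem_SIdx_reduce hlS
  simp only [ctr, rad, hB, reduce_succ_of_mem hl] at hsub
  have := eq_of_mem_nonredundantIdx_of_ball_subset (sortedIdx_spec hk).1 (sortedIdx_spec hl).1 hsub
  exact hne (congrArg (· + 1) (invFunOn_injOn_image _ _ hl hk this.symm))

lemma muSup_reduce_lt_top (h : rhoSum A < ⊤) : muSup (reduce A) < ⊤ := by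
  refine (iSup_le fun k => ?_).trans_lt (show (‖ctr A 0‖₊ + (A 0).2 + rhoSum A : ℝ≥0∞) < ⊤ from
    ENNReal.add_lt_top.2 ⟨ENNReal.add_lt_top.2 ⟨ENNReal.coe_lt_top, ENNReal.coe_lt_top⟩, h⟩)
  by_cases hk : k ∈ sortRank A '' nonredundantIdx A
  · obtain ⟨hs, -⟩ := sortedIdx_spec hk
    rw [reduce_succ_of_mem hk]
    have hnorm : ‖ctr A (sortedIdx A k)‖₊ ≤ ‖ctr A 0‖₊ + (A 0).2 + (A (sortedIdx A k)).2 := by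
      rw [← NNReal.coe_le_coe]
      exact norm_le_of_ball_inter_closedBall_nonempty hs.2.2.1
    calc (‖ctr A (sortedIdx A k)‖₊ : ℝ≥0∞)
        ≤ ‖ctr A 0‖₊ + (A 0).2 + (A (sortedIdx A k)).2 := by exact_mod_cast hnorm
      _ ≤ ‖ctr A 0‖₊ + (A 0).2 + rhoSum A := by gcongr; exact radius_le_rhoSum hs.1
  · rw [reduce_succ_of_notMem hk]
    exact le_self_add.trans le_self_add

lemma rhoLoc_reduce_le (E : Set ℂ) : rhoLoc (reduce A) E ≤ rhoLoc A E := by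
  have hA (n : HIdx (reduce A) E) := reduce_eq_of_mem_SIdx n.2.1
  let φ (n : HIdx (reduce A) E) : HIdx A E :=
    ⟨sortedIdx A (n - 1), ⟨(sortedIdx_spec (hA n).1).1.1, (sortedIdx_spec (hA n).1).1.2.1⟩,
      by simpa only [ctr, rad, (hA n).2] using n.2.2⟩
  have hφ : Injective φ := fun n n' hnn' => by
    have := invFunOn_injOn_image _ _ (hA n).1 (hA n').1 (congrArg Subtype.val hnn')
    have := n.2.1.1
    have := n'.2.1.1
    exact Subtype.ext (by omega)
  calc rhoLoc (reduce A) E = ∑' n, ((A (φ n)).2 : ℝ≥0∞) := tsum_congr fun n => by rw [(hA n).2]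
    _ ≤ rhoLoc A E := ENNReal.tsum_comp_le_tsum_of_injective hφ _

end SwissCheese

/-- Elimination of redundancy (Lemma 4.3): every abstract Swiss cheese with
finite radius sum can be replaced by a redundancy-free one in `N` with the
same Swiss cheese set, the same closed disk, finite centre bound, and smaller
local radius sums. -/
theorem stmt5 (A : ASC) (h : rhoSum A < ⊤) :
    ∃ B : ASC, RedundancyFree B ∧ memN B ∧ Xset B = Xset A ∧ muSup B < ⊤ ∧
      closedBall (ctr B 0) (rad B 0) = closedBall (ctr A 0) (rad A 0) ∧
      (∀ E : Set ℂ, rhoLoc B E ≤ rhoLoc A E) ∧ rhoSum B ≤ rhoSum A := by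
  open SwissCheese in
  have hρ : rhoSum (reduce A) ≤ rhoSum A := by
    simpa only [rhoSum_eq_rhoLoc_univ] using rhoLoc_reduce_le univ
  exact ⟨reduce A, redundancyFree_reduce, ⟨hρ.trans_lt h, reduce_radius_antitone h⟩,
    Xset_reduce h, muSup_reduce_lt_top h, rfl, rhoLoc_reduce_le, hρ⟩

end
end

section
/- Let A ∈ N be a redundancy-free abstract Swiss cheese with δ₁(A) > 0, set M = μ(A), R = ρ(A), let S̃ be the set of all B ∈ N(M,R) partially above A, and let S₁ = {B ∈ S̃ : δ₁(B) = sup_{C ∈ S̃} δ₁(C)}. Then every abstract Swiss cheese in S₁ is semiclassical. -/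
open Metric Set Filter Topology ENNReal

noncomputable section

/-! Since `A ∈ S̃`, every `B ∈ S₁` has `δ₁(B) ≥ δ₁(A) > 0`, so `r₀ > ρ(B) ≥ 0`, and no move
keeping `B` in `S̃` can strictly increase `δ₁`. If `B` is not semiclassical, such a move exists.
If a hole `B(b, s)` is not contained in `B(a₀, r₀)`, delete it and replace the outer disc by
`B̄(c, r₀ - t)`, with `c` moved away from `b` by some `t < s`: this misses the deleted hole, so `ρ`
drops by `s` while `r₀` drops only by `t`. If two holes meet, replace them by one disc containing
both, of radius `v < r_i + r_j`, inserted at its place in the non-increasing order of radii. The new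
cheese is partially above `B`, hence above `A`, and its centres and radii stay within `μ(A)` and
`ρ(A)`. -/

section Geometry

variable {E : Type*} [NormedAddCommGroup E] [NormedSpace ℝ E]

theorem exists_closedBall_subset_closedBall_avoiding_ball {a b : E} {r s : ℝ} (hs : 0 < s)
    (hsr : s < r) (h : ¬ ball b s ⊆ ball a r) :
    ∃ c t, 0 ≤ t ∧ t < s ∧ closedBall c (r - t) ⊆ closedBall a r ∧
      ball b s ⊆ (closedBall c (r - t))ᶜ := by
  set d := dist b a
  have hrd : r < s + d := by
    by_contra! hle
    exact h (ball_subset_ball' hle)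
  have hd : 0 < d := by
    by_contra! hd
    exact h (ball_subset_ball' (by linarith [dist_nonneg (x := b) (y := a)]))
  -- push the centre straight away from `b` by `t`, and shrink the radius by the same `t`
  set t := max 0 ((r + s - d) / 2)
  have hnorm : ‖a - b‖ = d := (dist_eq_norm' b a).symm
  set c := a + (t / d) • (a - b)
  have hca : dist c a = t := by
    rw [dist_eq_norm, add_sub_cancel_left, norm_smul, hnorm, Real.norm_of_nonneg (by positivity)]
    field_simp
  have hcb : dist c b = t + d := by
    have : c - b = (t / d + 1) • (a - b) := by simp only [c, add_smul, one_smul]; abel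
    rw [dist_eq_norm, this, norm_smul, hnorm, Real.norm_of_nonneg (by positivity)]
    field_simp
  refine ⟨c, t, le_max_left _ _, max_lt hs (by linarith), ?_, fun z hz hzc => ?_⟩
  · exact closedBall_subset_closedBall' (by linarith)
  · have := dist_triangle c z b
    rw [mem_ball] at hz
    rw [mem_closedBall, dist_comm] at hzc
    linarith [le_max_right 0 ((r + s - d) / 2)]

theorem exists_ball_superset_of_inter_nonempty {x y : E} {r s : ℝ} (hsr : s ≤ r)
    (h : (ball x r ∩ ball y s).Nonempty) :
    ∃ c ∈ segment ℝ x y, ∃ v, r ≤ v ∧ v < r + s ∧ ball x r ⊆ ball c v ∧ ball y s ⊆ ball c v := by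
  have hs : 0 < s := nonempty_ball.1 (h.mono inter_subset_right)
  have hd : dist x y < r + s := dist_lt_add_of_nonempty_ball_inter_ball h
  by_cases hyx : s + dist y x ≤ r
  · exact ⟨x, left_mem_segment ℝ x y, r, le_rfl, by linarith, subset_rfl, ball_subset_ball' hyx⟩
  rw [dist_comm] at hyx
  have hd0 : 0 < dist x y := by linarith
  -- the smallest ball containing both: its diameter is the union of the two diameters on line `xy`
  set v := (r + s + dist x y) / 2 with hv
  set θ := (v - r) / dist x y with hθ_def
  have hθ : θ ∈ Icc (0 : ℝ) 1 :=
    ⟨div_nonneg (by linarith) hd0.le, (div_le_one hd0).2 (by linarith)⟩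
  have hcx : dist (AffineMap.lineMap x y θ) x = v - r := by
    rw [dist_lineMap_left, Real.norm_of_nonneg hθ.1, hθ_def]
    field_simp
  have hcy : dist (AffineMap.lineMap x y θ) y = v - s := by
    rw [dist_lineMap_right, Real.norm_of_nonneg (sub_nonneg.2 hθ.2), hθ_def]
    field_simp
    linarith
  exact ⟨_, lineMap_mem_segment ℝ x y hθ, v, by linarith, by linarith,
    ball_subset_ball' (by rw [dist_comm]; linarith),
    ball_subset_ball' (by rw [dist_comm]; linarith)⟩

theorem norm_le_max_of_mem_segment {x y c : E} (hc : c ∈ segment ℝ x y) :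
    ‖c‖ ≤ max ‖x‖ ‖y‖ := by
  simpa using (convex_closedBall (0 : E) (max ‖x‖ ‖y‖)).segment_subset
    (by simp) (by simp) hc

end Geometry

def skipAt (j n : ℕ) : ℕ := if n < j then n else n + 1

theorem le_skipAt (j n : ℕ) : n ≤ skipAt j n := by
  unfold skipAt; split_ifs <;> omega

theorem skipAt_ne (j n : ℕ) : skipAt j n ≠ j := by
  unfold skipAt; split_ifs <;> omega

theorem skipAt_of_lt {j n : ℕ} (h : n < j) : skipAt j n = n := if_pos h

theorem skipAt_succ {j : ℕ} (hj : 1 ≤ j) (n : ℕ) : skipAt j (n + 1) = skipAt (j - 1) n + 1 := by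
  unfold skipAt; split_ifs <;> omega

theorem skipAt_monotone (j : ℕ) : Monotone (skipAt j) := fun m n hmn => by
  unfold skipAt; split_ifs <;> omega

theorem skipAt_injective (j : ℕ) : Function.Injective (skipAt j) := fun m n h => by
  unfold skipAt at h; split_ifs at h <;> omega

theorem exists_skipAt_eq {j m : ℕ} (hmj : m ≠ j) : ∃ n, skipAt j n = m := by
  rcases lt_or_gt_of_ne hmj with h | h
  · exact ⟨m, skipAt_of_lt h⟩
  · exact ⟨m - 1, by unfold skipAt; split_ifs <;> omega⟩

theorem exists_one_le_skipAt_eq {j m : ℕ} (hj : 1 ≤ j) (hm : 1 ≤ m) (hmj : m ≠ j) :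
    ∃ n, 1 ≤ n ∧ skipAt j n = m := by
  obtain ⟨n, rfl⟩ := exists_skipAt_eq hmj
  refine ⟨n, Nat.one_le_iff_ne_zero.2 fun hn => ?_, rfl⟩
  simp [hn, skipAt_of_lt hj] at hm

theorem ENNReal.tsum_comp_skipAt_add (f : ℕ → ℝ≥0∞) (j : ℕ) :
    ∑' n, f (skipAt j n) + f j = ∑' n, f n := by
  classical
  conv_rhs => rw [ENNReal.tsum_eq_add_tsum_ite j]
  rw [add_comm]
  congr 1
  convert (skipAt_injective j).tsum_eq (f := fun m => if m = j then 0 else f m) ?_ using 1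
  · simp [skipAt_ne]
  · exact tsum_congr fun m => by congr
  · intro m hm
    exact exists_skipAt_eq fun h => hm (by simp [h])

def disc (x : ℂ × NNReal) : Set ℂ := ball x.1 x.2

def holes (B : ASC) : Set (ℂ × NNReal) := B '' Ici 1

def insertAt (C : ASC) (p : ℕ) (x : ℂ × NNReal) : ASC :=
  fun n => if n < p then C n else if n = p then x else C (n - 1)

theorem insertAt_skipAt (C : ASC) (p : ℕ) (x : ℂ × NNReal) (n : ℕ) :
    insertAt C p x (skipAt p n) = C n := by
  unfold insertAt skipAt
  split_ifs <;> first | rfl | omega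

theorem insertAt_self (C : ASC) (p : ℕ) (x : ℂ × NNReal) : insertAt C p x p = x := by
  simp [insertAt]

theorem insertAt_zero (C : ASC) {p : ℕ} (hp : 1 ≤ p) (x : ℂ × NNReal) : insertAt C p x 0 = C 0 :=
  if_pos hp

theorem rhoSum_comp_skipAt (B : ASC) {j : ℕ} (hj : 1 ≤ j) :
    rhoSum (B ∘ skipAt j) + (B j).2 = rhoSum B := by
  have := ENNReal.tsum_comp_skipAt_add (fun m => ((B (m + 1)).2 : ℝ≥0∞)) (j - 1)
  rw [Nat.sub_add_cancel hj] at this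
  simpa only [rhoSum, Function.comp_apply, skipAt_succ hj] using this

theorem rhoSum_insertAt (C : ASC) {p : ℕ} (hp : 1 ≤ p) (x : ℂ × NNReal) :
    rhoSum (insertAt C p x) = rhoSum C + x.2 := by
  rw [← rhoSum_comp_skipAt _ hp, insertAt_self]
  congr 2
  exact funext (insertAt_skipAt C p x)

theorem rhoSum_update_zero (B : ASC) (x : ℂ × NNReal) : rhoSum (Function.update B 0 x) = rhoSum B :=
  tsum_congr fun n => by simp

theorem holes_comp_skipAt_subset (B : ASC) (j : ℕ) : holes (B ∘ skipAt j) ⊆ holes B := by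
  rintro _ ⟨n, hn, rfl⟩
  exact ⟨skipAt j n, le_trans hn (le_skipAt j n), rfl⟩

theorem mem_holes_comp_skipAt {B : ASC} {j : ℕ} (hj : 1 ≤ j) {y : ℂ × NNReal} (hy : y ∈ holes B)
    (hyj : y ≠ B j) : y ∈ holes (B ∘ skipAt j) := by
  obtain ⟨m, hm, rfl⟩ := hy
  obtain ⟨n, hn, rfl⟩ := exists_one_le_skipAt_eq hj hm fun h => hyj (by rw [h])
  exact ⟨n, hn, rfl⟩

theorem holes_update_zero (B : ASC) (x : ℂ × NNReal) : holes (Function.update B 0 x) = holes B :=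
  image_congr fun n hn => Function.update_of_ne (by simp at hn; omega) _ _

theorem holes_insertAt (C : ASC) {p : ℕ} (hp : 1 ≤ p) (x : ℂ × NNReal) :
    holes (insertAt C p x) = insert x (holes C) := by
  ext y
  constructor
  · rintro ⟨n, hn, rfl⟩
    by_cases hnp : n = p
    · exact .inl (by rw [hnp, insertAt_self])
    · obtain ⟨m, hm, rfl⟩ := exists_one_le_skipAt_eq hp hn hnp
      exact .inr ⟨m, hm, (insertAt_skipAt C p x m).symm⟩
  · rintro (rfl | ⟨m, hm, rfl⟩)
    · exact ⟨p, hp, insertAt_self C p _⟩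
    · exact ⟨skipAt p m, le_trans hm (le_skipAt p m), insertAt_skipAt C p x m⟩

theorem nnnorm_le_muSup {B : ASC} {y : ℂ × NNReal} (hy : y ∈ holes B) :
    (‖y.1‖₊ : ℝ≥0∞) ≤ muSup B := by
  obtain ⟨n, hn, rfl⟩ := hy
  obtain ⟨m, rfl⟩ := Nat.exists_eq_add_of_le' hn
  exact le_iSup (fun m => (‖(B (m + 1)).1‖₊ : ℝ≥0∞)) m

theorem muSup_le {B : ASC} {M : ℝ≥0∞} (h : ∀ y ∈ holes B, (‖y.1‖₊ : ℝ≥0∞) ≤ M) :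
    muSup B ≤ M :=
  iSup_le fun n => h _ ⟨n + 1, by simp, rfl⟩

theorem memN_comp_skipAt {B : ASC} (hB : memN B) {j : ℕ} (hj : 1 ≤ j) : memN (B ∘ skipAt j) := by
  have hanti := antitoneOn_nat_Ici_of_succ_le (f := fun n => (B n).2) hB.2
  refine ⟨lt_of_le_of_lt ?_ hB.1, fun n hn => ?_⟩
  · rw [← rhoSum_comp_skipAt B hj]
    exact le_self_add
  · exact hanti (le_trans hn (le_skipAt j n)) (le_trans (by omega) (le_skipAt j (n + 1)))
      (skipAt_monotone j n.le_succ)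

theorem memN_update_zero {B : ASC} (hB : memN B) (x : ℂ × NNReal) :
    memN (Function.update B 0 x) := by
  refine ⟨(rhoSum_update_zero B x).symm ▸ hB.1, fun n hn => ?_⟩
  simpa [Function.update_of_ne (by omega : n ≠ 0)] using hB.2 n hn

theorem exists_memN_insertAt {C : ASC} (hC : memN C) {x : ℂ × NNReal}
    (hex : ∃ q, 1 ≤ q ∧ (C q).2 ≤ x.2) : ∃ p, 1 ≤ p ∧ memN (insertAt C p x) := by
  classical
  -- `x` goes in front of the first hole that is not larger than it
  set p := Nat.find hex
  have hp : 1 ≤ p ∧ (C p).2 ≤ x.2 := Nat.find_spec hex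
  have hbefore : ∀ q, 1 ≤ q → q < p → x.2 ≤ (C q).2 := fun q hq hqp =>
    (not_le.1 fun h => Nat.find_min hex hqp ⟨hq, h⟩).le
  refine ⟨p, hp.1, ?_, fun n hn => ?_⟩
  · rw [rhoSum_insertAt C hp.1]
    exact ENNReal.add_lt_top.2 ⟨hC.1, ENNReal.coe_lt_top⟩
  · unfold insertAt
    split_ifs <;> try omega
    · exact hC.2 n hn
    · exact hbefore n hn (by omega)
    · simpa [show n = p by omega] using hp.2
    · simpa [Nat.sub_add_cancel (by omega : 1 ≤ n)] using hC.2 (n - 1) (by omega)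

theorem PartiallyAbove.refl (A : ASC) : PartiallyAbove A A :=
  ⟨subset_rfl, fun n hn => .inr ⟨n, hn, subset_rfl⟩⟩

theorem PartiallyAbove.trans {A B C : ASC} (hCB : PartiallyAbove C B) (hBA : PartiallyAbove B A) :
    PartiallyAbove C A := by
  refine ⟨hCB.1.trans hBA.1, fun n hn => ?_⟩
  rcases hBA.2 n hn with hout | ⟨m, hm, hnm⟩
  · exact .inl (hout.trans (compl_subset_compl.2 hCB.1))
  · rcases hCB.2 m hm with hout | ⟨l, hl, hml⟩
    · exact .inl (hnm.trans hout)
    · exact .inr ⟨l, hl, hnm.trans hml⟩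

theorem partiallyAbove_of_holes {B C : ASC}
    (h0 : closedBall (ctr C 0) (rad C 0) ⊆ closedBall (ctr B 0) (rad B 0))
    (h : ∀ y ∈ holes B,
      disc y ⊆ (closedBall (ctr C 0) (rad C 0))ᶜ ∨ ∃ z ∈ holes C, disc y ⊆ disc z) :
    PartiallyAbove C B := by
  refine ⟨h0, fun n hn => ?_⟩
  rcases h (B n) ⟨n, hn, rfl⟩ with hout | ⟨_, ⟨m, hm, rfl⟩, hsub⟩
  · exact .inl hout
  · exact .inr ⟨m, hm, hsub⟩

theorem self_mem_Stilde {A : ASC} (hA : memN A) : A ∈ Stilde A :=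
  ⟨⟨hA, le_rfl, le_rfl⟩, PartiallyAbove.refl A⟩

theorem mem_Stilde_of_partiallyAbove {A B C : ASC} (hB : B ∈ Stilde A) (hC : memN C)
    (hμ : muSup C ≤ muSup B) (hρ : rhoSum C ≤ rhoSum B) (hCB : PartiallyAbove C B) :
    C ∈ Stilde A :=
  ⟨⟨hC, hμ.trans hB.1.2.1, hρ.trans hB.1.2.2⟩, hCB.trans hB.2⟩

theorem delta1_le_of_mem_S1 {A B C : ASC} (hB : B ∈ S1 A) (hC : C ∈ Stilde A) :
    delta1 C ≤ delta1 B :=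
  hB.2 ▸ le_sSup ⟨C, hC, rfl⟩

theorem delta1_eq_coe {B : ASC} (h : rhoSum B ≠ ⊤) :
    delta1 B = ((rad B 0 - (rhoSum B).toReal : ℝ) : EReal) := by
  rw [delta1, EReal.coe_sub, ← ENNReal.coe_toNNReal h, EReal.coe_nnreal_eq_coe_real]
  rfl

theorem toReal_rhoSum_lt_rad_zero {B : ASC} (h : rhoSum B ≠ ⊤) (hδ : 0 < delta1 B) :
    (rhoSum B).toReal < rad B 0 := by
  rw [delta1_eq_coe h] at hδ
  exact sub_pos.1 (EReal.coe_pos.1 hδ)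

theorem rad_le_toReal_rhoSum {B : ASC} (h : rhoSum B ≠ ⊤) {k : ℕ} (hk : 1 ≤ k) :
    rad B k ≤ (rhoSum B).toReal := by
  rw [← rhoSum_comp_skipAt B hk] at h ⊢
  simpa [rad] using ENNReal.toReal_mono h le_add_self

theorem delta1_lt_delta1 {B C : ASC} (hB : rhoSum B ≠ ⊤) {x y : NNReal}
    (hρ : rhoSum C + x = rhoSum B + y) (h : rad B 0 + y < rad C 0 + x) : delta1 B < delta1 C := by
  have hB' : rhoSum B + y ≠ ⊤ := ENNReal.add_ne_top.2 ⟨hB, ENNReal.coe_ne_top⟩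
  have hC : rhoSum C ≠ ⊤ := (ENNReal.add_ne_top.1 (hρ ▸ hB')).1
  have hreal := congrArg ENNReal.toReal hρ
  rw [ENNReal.toReal_add hC ENNReal.coe_ne_top, ENNReal.toReal_add hB ENNReal.coe_ne_top] at hreal
  rw [delta1_eq_coe hB, delta1_eq_coe hC, EReal.coe_lt_coe_iff]
  simp only [ENNReal.coe_toReal] at hreal
  linarith

section Moves

variable {A B : ASC}

theorem exists_delta1_lt_of_not_disc_subset (hB : B ∈ Stilde A) (hδ : 0 < delta1 B) {k : ℕ}
    (hk : k ∈ SIdx B) (hout : ¬ disc (B k) ⊆ disc (B 0)) :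
    ∃ C ∈ Stilde A, delta1 B < delta1 C := by
  have hfin := hB.1.1.1.ne
  have hkr : rad B k < rad B 0 :=
    (rad_le_toReal_rhoSum hfin hk.1).trans_lt (toReal_rhoSum_lt_rad_zero hfin hδ)
  obtain ⟨c, t, ht0, htk, hsub, hmiss⟩ :=
    exists_closedBall_subset_closedBall_avoiding_ball hk.2 hkr hout
  set C := Function.update (B ∘ skipAt k) 0 (c, (rad B 0 - t).toNNReal)
  have hrad : rad C 0 = rad B 0 - t := Real.coe_toNNReal _ (by linarith)
  have hC0 : closedBall (ctr C 0) (rad C 0) = closedBall c (rad B 0 - t) := by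
    rw [hrad]
    rfl
  have hρ : rhoSum C + (B k).2 = rhoSum B + 0 := by
    rw [rhoSum_update_zero, rhoSum_comp_skipAt B hk.1, add_zero]
  refine ⟨C, mem_Stilde_of_partiallyAbove hB (memN_update_zero (memN_comp_skipAt hB.1.1 hk.1) _)
    (muSup_le fun y hy => ?_) ?_ (partiallyAbove_of_holes (hC0 ▸ hsub) fun y hy => ?_),
    delta1_lt_delta1 hfin hρ ?_⟩
  · rw [holes_update_zero] at hy
    exact nnnorm_le_muSup (holes_comp_skipAt_subset B k hy)
  · rw [← rhoSum_comp_skipAt B hk.1, rhoSum_update_zero]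
    exact le_self_add
  · by_cases hyk : y = B k
    · exact .inl (hyk ▸ hC0 ▸ hmiss)
    · refine .inr ⟨y, ?_, subset_rfl⟩
      rw [holes_update_zero]
      exact mem_holes_comp_skipAt hk.1 hy hyk
  · rw [hrad]
    simp only [NNReal.coe_zero]
    change _ < _ + rad B k
    linarith

theorem exists_memN_replace_two_holes (hB : memN B) {i j : ℕ} (hi : 1 ≤ i) (hij : i < j)
    {x : ℂ × NNReal} (hx : (B i).2 ≤ x.2) :
    ∃ C, memN C ∧ C 0 = B 0 ∧ rhoSum C + ((B i).2 + (B j).2 : NNReal) = rhoSum B + x.2 ∧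
      holes C ⊆ insert x (holes B) ∧ insert x (holes B \ {B i, B j}) ⊆ holes C := by
  have hj : 1 ≤ j := hi.trans hij.le
  set D := (B ∘ skipAt j) ∘ skipAt i
  have hDi : (B ∘ skipAt j) i = B i := by simp [skipAt_of_lt hij]
  have hρD : rhoSum D + (B i).2 + (B j).2 = rhoSum B := by
    have h := rhoSum_comp_skipAt (B ∘ skipAt j) hi
    rw [hDi] at h
    rw [← rhoSum_comp_skipAt B hj, ← h]
  have hle : i ≤ skipAt j (skipAt i i) := (le_skipAt i i).trans (le_skipAt j _)
  have hDi_le : (D i).2 ≤ (B i).2 :=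
    antitoneOn_nat_Ici_of_succ_le (f := fun n => (B n).2) hB.2 hi (hi.trans hle) hle
  obtain ⟨p, hp, hC⟩ :=
    exists_memN_insertAt (memN_comp_skipAt (memN_comp_skipAt hB hj) hi) ⟨i, hi, hDi_le.trans hx⟩
  refine ⟨insertAt D p x, hC, ?_, ?_, ?_, ?_⟩
  · rw [insertAt_zero D hp]
    simp [D, skipAt_of_lt hi, skipAt_of_lt hj]
  · rw [rhoSum_insertAt D hp, ← hρD]
    push_cast
    ring
  · rw [holes_insertAt D hp]
    exact insert_subset_insert
      ((holes_comp_skipAt_subset _ i).trans (holes_comp_skipAt_subset B j))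
  · rw [holes_insertAt D hp]
    refine insert_subset_insert fun y ⟨hy, hyij⟩ => ?_
    simp only [mem_insert_iff, mem_singleton_iff, not_or] at hyij
    exact mem_holes_comp_skipAt hi (mem_holes_comp_skipAt hj hy hyij.2) (hDi ▸ hyij.1)

theorem exists_delta1_lt_of_disc_inter (hB : B ∈ Stilde A) {i j : ℕ} (hi : 1 ≤ i) (hij : i < j)
    (hmeet : (disc (B i) ∩ disc (B j)).Nonempty) : ∃ C ∈ Stilde A, delta1 B < delta1 C := by
  have hN := hB.1.1
  have hj : 1 ≤ j := hi.trans hij.le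
  have hji : rad B j ≤ rad B i :=
    NNReal.coe_le_coe.2 (antitoneOn_nat_Ici_of_succ_le (f := fun n => (B n).2) hN.2 hi hj hij.le)
  obtain ⟨c, hc, v, hiv, hv, hsubi, hsubj⟩ := exists_ball_superset_of_inter_nonempty hji hmeet
  have hv0 : 0 ≤ v := (B i).2.2.trans hiv
  set x : ℂ × NNReal := (c, v.toNNReal)
  have hxv : (x.2 : ℝ) = v := Real.coe_toNNReal _ hv0
  obtain ⟨C, hC, hC0, hρ, hsub, hsup⟩ :=
    exists_memN_replace_two_holes hN hi hij (x := x) ((Real.le_toNNReal_iff_coe_le hv0).2 hiv)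
  refine ⟨C, mem_Stilde_of_partiallyAbove hB hC (muSup_le fun y hy => ?_) ?_
    (partiallyAbove_of_holes (by simp only [ctr, rad, hC0]; exact subset_rfl) fun y hy => .inr ?_),
    delta1_lt_delta1 hN.1.ne hρ ?_⟩
  · rcases hsub hy with rfl | hy
    · have hc' : ‖c‖₊ ≤ max ‖(B i).1‖₊ ‖(B j).1‖₊ := by
        simpa [← NNReal.coe_le_coe] using norm_le_max_of_mem_segment hc
      calc (‖c‖₊ : ℝ≥0∞) ≤ max (‖(B i).1‖₊ : ℝ≥0∞) ‖(B j).1‖₊ := by exact_mod_cast hc'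
        _ ≤ muSup B := max_le (nnnorm_le_muSup ⟨i, hi, rfl⟩) (nnnorm_le_muSup ⟨j, hj, rfl⟩)
    · exact nnnorm_le_muSup hy
  · have hvx : x.2 ≤ (B i).2 + (B j).2 := by
      rw [← NNReal.coe_le_coe, hxv, NNReal.coe_add]
      exact hv.le
    exact ENNReal.le_of_add_le_add_right ENNReal.coe_ne_top (hρ.trans_le (by gcongr))
  · have hdx : disc x = ball c v := by rw [disc, hxv]
    by_cases hyi : y = B i
    · exact ⟨x, hsup (mem_insert _ _), hyi ▸ hdx ▸ hsubi⟩
    by_cases hyj : y = B j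
    · exact ⟨x, hsup (mem_insert _ _), hyj ▸ hdx ▸ hsubj⟩
    exact ⟨y, hsup (.inr ⟨hy, by simp [hyi, hyj]⟩), subset_rfl⟩
  · simp only [rad, hC0, NNReal.coe_add]
    rw [hxv]
    gcongr
    exact hv

end Moves

theorem stmt9_general (A : ASC) (hN : memN A) (hd : 0 < delta1 A) :
    ∀ B ∈ S1 A, IsSemiclassicalASC B := by
  intro B hB
  have hδ : 0 < delta1 B := hd.trans_le (delta1_le_of_mem_S1 hB (self_mem_Stilde hN))
  have hfin := hB.1.1.1.1
  refine ⟨hfin, ENNReal.toReal_nonneg.trans_lt (toReal_rhoSum_lt_rad_zero hfin.ne hδ),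
    fun k hk => ⟨?_, fun l hl hlk => ?_⟩⟩
  · by_contra hout
    obtain ⟨C, hC, hlt⟩ := exists_delta1_lt_of_not_disc_subset hB.1 hδ hk hout
    exact (delta1_le_of_mem_S1 hB hC).not_gt hlt
  · by_contra hdisj
    have hmeet := nonempty_iff_ne_empty.2 hdisj
    obtain ⟨C, hC, hlt⟩ : ∃ C ∈ Stilde A, delta1 B < delta1 C := by
      rcases lt_or_gt_of_ne hlk with h | h
      · exact exists_delta1_lt_of_disc_inter hB.1 hl.1 h (inter_comm _ _ ▸ hmeet)
      · exact exists_delta1_lt_of_disc_inter hB.1 hk.1 h hmeet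
    exact (delta1_le_of_mem_S1 hB hC).not_gt hlt

/-- Theorem 4.8: all abstract Swiss cheeses in `S₁` are semiclassical. -/
theorem stmt9 (A : ASC) (hN : memN A) (hrf : RedundancyFree A) (hd : 0 < delta1 A) :
    ∀ B ∈ S1 A, IsSemiclassicalASC B :=
  stmt9_general A hN hd

end
end
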